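/- Let G be a simple graph, u, v distinct vertices, G' the simple graph obtained from G by identifying u and v, and h : G -> G' the quotient map. If u and v are adjacent in G, then for every cycle C of G' there is a closed walk W in G whose image h(W) is homologous in G' to C; if d(u,v) = 2, the same conclusion holds and moreover W can be chosen to be a single cycle, or the concatenation of two cycles of G sharing a vertex, mapping onto C up to homology. -/

import Mathlib

open SimpleGraph

/-- The number of steps of the walk `W` from a vertex labeled `i` to a vertex labeled `j`
(with respect to the labeling `f`). -/
def colorSteps {V C : Type} [DecidableEq C] {G : SimpleGraph V} (f : V → C)
    {x y : V} (W : G.Walk x y) (i j : C) : ℕ :=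
  W.darts.countP fun d => decide (f d.toProd.1 = i ∧ f d.toProd.2 = j)

/-- A coloring `f` of `G` is a null coloring if for every closed walk `W` and every ordered
pair `(i, j)` of distinct colors, the number of steps of `W` from a vertex colored `i` to a
vertex colored `j` equals the number of steps from a vertex colored `j` to one colored `i`. -/
def IsNullColoring {V C : Type} [DecidableEq C] (G : SimpleGraph V) (f : V → C) : Prop :=
  ∀ (x : V) (W : G.Walk x x) (i j : C), i ≠ j → colorSteps f W i j = colorSteps f W j i

/-- A null coloring is maximal if no null coloring of `G` has more color classes
(the number of color classes of a coloring `g` is `(Set.range g).ncard`). -/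
def IsMaximalNullColoring {V C : Type} [DecidableEq C] (G : SimpleGraph V) (f : V → C) : Prop :=
  IsNullColoring G f ∧
    ∀ (D : Type) [DecidableEq D] (g : V → D), IsNullColoring G g →
      (Set.range g).ncard ≤ (Set.range f).ncard

/-- The quotient graph `G/f`: vertices are the color classes of `f` (identified with the
range of `f`), two distinct classes being adjacent iff some edge of `G` joins them. -/
def quotientGraph {V C : Type} (G : SimpleGraph V) (f : V → C) :
    SimpleGraph (Set.range f) where
  Adj a b := a ≠ b ∧ ∃ x y : V, G.Adj x y ∧ f x = a.1 ∧ f y = b.1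
  symm := by
    constructor
    rintro a b ⟨hab, x, y, hxy, hx, hy⟩
    exact ⟨hab.symm, y, x, hxy.symm, hy, hx⟩
  loopless := by constructor; rintro a ⟨h, -⟩; exact h rfl

/-- The graph obtained from `G` by identifying the vertices `u` and `v` (the merged vertex
is represented by `u`; any loops created are discarded). -/
def identify {V : Type} (G : SimpleGraph V) (u v : V) : SimpleGraph {x : V // x ≠ v} where
  Adj a b := a ≠ b ∧ (G.Adj a.1 b.1 ∨ (a.1 = u ∧ G.Adj v b.1) ∨ (b.1 = u ∧ G.Adj a.1 v))
  symm := by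
    constructor
    rintro a b ⟨hab, h⟩
    refine ⟨hab.symm, ?_⟩
    rcases h with h | ⟨ha, hb⟩ | ⟨hb, ha⟩
    · exact Or.inl h.symm
    · exact Or.inr (Or.inr ⟨ha, hb.symm⟩)
    · exact Or.inr (Or.inl ⟨hb, ha.symm⟩)
  loopless := by constructor; rintro a ⟨h, -⟩; exact h rfl

/-- The quotient map `h : G → G'` corresponding to the identification of `u` and `v`. -/
def identifyMap {V : Type} [DecidableEq V] (u v : V) (huv : u ≠ v) : V → {x : V // x ≠ v} :=
  fun x => if hx : x = v then ⟨u, huv⟩ else ⟨x, hx⟩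

/-- The net number of steps of `W` from label `a` to label `b`:  steps from `a` to `b`
minus steps from `b` to `a`. -/
def netCount {V C : Type} [DecidableEq C] {G : SimpleGraph V} (f : V → C)
    {x y : V} (W : G.Walk x y) (a b : C) : ℤ :=
  (colorSteps f W a b : ℤ) - (colorSteps f W b a : ℤ)

/-!
Cycles of `G'` are lifted step by step. If `u ~ v`, a step of `G'` at the merged vertex lifts to
at most two steps of `G`, the extra step `u → v` collapsing to a point. If `d(u,v) = 2`, rotate
the cycle to start at the merged vertex: what remains is a path of `G` avoiding `u` and `v`
whose ends `a`, `c` are adjacent to `u` or `v`. If one of `u`, `v` is adjacent to both ends,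
it closes the path to a cycle. Otherwise `a ~ s` and `c ~ t` with `{s, t} = {u, v}`, and the
path is closed through a common neighbour `w` of `u` and `v`; the two extra steps `t → w → s`
map to `uv → w → uv`, which cancel in homology, and if `w` already lies on the path the closed
walk splits at `w` into two cycles.
-/

def stepNet {C : Type} [DecidableEq C] (p q a b : C) : ℤ :=
  (if p = a ∧ q = b then 1 else 0) - if p = b ∧ q = a then 1 else 0

section NetCount

variable {V C : Type} [DecidableEq C] {G : SimpleGraph V} (f : V → C)

@[simp]
lemma stepNet_self (p a b : C) : stepNet p p a b = 0 := by
  unfold stepNet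
  split_ifs <;> grind

lemma stepNet_swap (p q a b : C) : stepNet q p a b = -stepNet p q a b := by
  unfold stepNet
  split_ifs <;> grind

@[simp]
lemma netCount_nil (x : V) (a b : C) : netCount f (Walk.nil : G.Walk x x) a b = 0 := by
  simp [netCount, colorSteps]

lemma netCount_cons {x y z : V} (h : G.Adj x y) (W : G.Walk y z) (a b : C) :
    netCount f (Walk.cons h W) a b = stepNet (f x) (f y) a b + netCount f W a b := by
  simp only [netCount, colorSteps, stepNet, Walk.darts_cons, List.countP_cons, decide_eq_true_eq]
  push_cast
  split_ifs <;> ring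

lemma netCount_append {x y z : V} (W₁ : G.Walk x y) (W₂ : G.Walk y z) (a b : C) :
    netCount f (W₁.append W₂) a b = netCount f W₁ a b + netCount f W₂ a b := by
  induction W₁ with
  | nil => simp
  | cons h W ih => rw [Walk.cons_append, netCount_cons, netCount_cons, ih]; ring

lemma netCount_concat {x y z : V} (W : G.Walk x y) (h : G.Adj y z) (a b : C) :
    netCount f (W.concat h) a b = netCount f W a b + stepNet (f y) (f z) a b := by
  rw [Walk.concat_eq_append, netCount_append, netCount_cons, netCount_nil, add_zero]

lemma netCount_rotate [DecidableEq V] {x y : V} (W : G.Walk x x) (hy : y ∈ W.support)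
    (a b : C) :
    netCount f (W.rotate y hy) a b = netCount f W a b := by
  conv_rhs => rw [← W.take_spec hy]
  rw [Walk.rotate, netCount_append, netCount_append, add_comm]

lemma netCount_map {V' : Type} {G' : SimpleGraph V'} (φ : G →g G') (g : V' → C)
    {x y : V} (W : G.Walk x y) (a b : C) :
    netCount g (W.map φ) a b = netCount (g ∘ φ) W a b := by
  induction W with
  | nil => simp
  | cons h W ih => simp only [Walk.map_cons, netCount_cons, ih, Function.comp]

lemma netCount_transfer {H : SimpleGraph V} {x y : V} (W : G.Walk x y) (hW) (a b : C) :
    netCount f (W.transfer H hW) a b = netCount f W a b := by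
  induction W with
  | nil => simp
  | cons h W ih =>
    exact (netCount_cons f _ _ a b).trans
      ((congrArg _ (ih _)).trans (netCount_cons f h W a b).symm)

end NetCount

lemma netCount_eq_of_perm_darts {V C : Type} [DecidableEq C] {G : SimpleGraph V} (f : V → C)
    {x y x' y' : V} {W : G.Walk x y} {W' : G.Walk x' y'} (h : W.darts.Perm W'.darts) (a b : C) :
    netCount f W a b = netCount f W' a b := by
  simp only [netCount, colorSteps, h.countP_eq]

namespace SimpleGraph.Walk

variable {V : Type} {G : SimpleGraph V}

def IsCycleOrAppendCycles {x : V} (W : G.Walk x x) : Prop :=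
  W.IsCycle ∨ ∃ W₁ W₂ : G.Walk x x, W₁.IsCycle ∧ W₂.IsCycle ∧ W = W₁.append W₂

theorem concat_isCycle_iff {u v : V} (p : G.Walk u v) (h : G.Adj v u) :
    (p.concat h).IsCycle ↔ p.IsPath ∧ s(v, u) ∉ p.edges := by
  rw [← isCycle_reverse, reverse_concat, cons_isCycle_iff, isPath_reverse_iff, edges_reverse,
    List.mem_reverse, Sym2.eq_swap]

theorem IsPath.cons_concat_isCycle {s t w : V} {P : G.Walk s t} (hP : P.IsPath)
    (hw : w ∉ P.support) (hst : s ≠ t) (hws : G.Adj w s) (htw : G.Adj t w) :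
    (cons hws (P.concat htw)).IsCycle := by
  rw [cons_isCycle_iff, edges_concat, List.concat_eq_append, List.mem_append, List.mem_singleton,
    Sym2.eq_iff]
  refine ⟨hP.concat hw htw, ?_⟩
  rintro (h | ⟨rfl, rfl⟩ | ⟨-, rfl⟩)
  · exact hw (P.fst_mem_support_of_mem_edges h)
  · exact hst rfl
  · exact hst rfl

theorem IsPath.exists_cycle_or_append_cycles [DecidableEq V] {s t w : V} {P : G.Walk s t}
    (hP : P.IsPath) (hst : s ≠ t) (hws : G.Adj w s) (htw : G.Adj t w)
    (hs : s(w, s) ∉ P.edges) (ht : s(t, w) ∉ P.edges) :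
    ∃ (x : V) (W : G.Walk x x),
      W.IsCycleOrAppendCycles ∧ W.darts.Perm (cons hws (P.concat htw)).darts := by
  by_cases hw : w ∈ P.support
  · have hcycle₁ : ((P.dropUntil w hw).concat htw).IsCycle :=
      (concat_isCycle_iff _ _).mpr
        ⟨hP.dropUntil hw, fun h => ht (P.edges_dropUntil_subset_edges hw h)⟩
    have hcycle₂ : (cons hws (P.takeUntil w hw)).IsCycle :=
      (cons_isCycle_iff _ _).mpr
        ⟨hP.takeUntil hw, fun h => hs (P.edges_takeUntil_subset_edges hw h)⟩
    refine ⟨w, _, Or.inr ⟨_, _, hcycle₁, hcycle₂, rfl⟩, ?_⟩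
    rw [darts_append]
    refine List.perm_append_comm.trans ?_
    simp [← List.append_assoc, ← darts_append, take_spec]
  · exact ⟨w, _, Or.inl (hP.cons_concat_isCycle hw hst hws htw), List.Perm.refl _⟩

theorem IsPath.exists_cycle_or_append_cycles_of_cons_concat [DecidableEq V] {s t w a c : V}
    {L : G.Walk a c} (hL : L.IsPath) (hs : s ∉ L.support) (ht : t ∉ L.support) (hst : s ≠ t)
    (hsa : G.Adj s a) (hct : G.Adj c t) (hws : G.Adj w s) (htw : G.Adj t w) (hwa : w ≠ a)
    (hwc : w ≠ c) :
    ∃ (x : V) (W : G.Walk x x), W.IsCycleOrAppendCycles ∧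
      W.darts.Perm (cons hws ((cons hsa (L.concat hct)).concat htw)).darts := by
  have hws_ne := hws.ne
  have htw_ne := htw.ne
  have hmem_support (y z : V) (h : s(y, z) ∈ L.edges) : y ∈ L.support ∧ z ∈ L.support :=
    ⟨L.fst_mem_support_of_mem_edges h, L.snd_mem_support_of_mem_edges h⟩
  have hP : (cons hsa (L.concat hct)).IsPath := (hL.concat ht hct).cons (by simp [hs, hst])
  refine hP.exists_cycle_or_append_cycles hst hws htw ?_ ?_ <;>
  · simp only [edges_cons, edges_concat, List.concat_eq_append, List.mem_cons, List.mem_append,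
      Sym2.eq_iff]
    grind

theorem IsCycle.exists_eq_cons_concat {x : V} {C : G.Walk x x} (hC : C.IsCycle) :
    ∃ (a c : V) (ha : G.Adj x a) (Q : G.Walk a c) (hc : G.Adj c x),
      C = cons ha (Q.concat hc) ∧ Q.IsPath ∧ x ∉ Q.support ∧ a ≠ c := by
  cases C with
  | nil => exact absurd rfl hC.ne_nil
  | cons ha P =>
    cases P with
    | nil => exact absurd ha (G.loopless.irrefl _)
    | cons hb P =>
      obtain ⟨c, Q, hc, hQ⟩ := exists_cons_eq_concat hb P
      have hlen := hC.three_le_length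
      rw [cons_isCycle_iff, hQ, concat_isPath_iff] at hC
      refine ⟨_, c, ha, Q, hc, by rw [hQ], hC.1.1, hC.1.2, ?_⟩
      rintro rfl
      have hQnil := length_eq_zero_iff.mpr (isPath_iff_nil.mp hC.1.1)
      rw [length_cons, hQ, length_concat, hQnil] at hlen
      omega

end SimpleGraph.Walk

section Identify

variable {V : Type} {G : SimpleGraph V} {u v : V}

lemma adj_of_identify_adj {a b : {x : V // x ≠ v}} (hab : (identify G u v).Adj a b)
    (ha : a.1 ≠ u) (hb : b.1 ≠ u) : G.Adj a.1 b.1 := by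
  rcases hab.2 with h | ⟨h, -⟩ | ⟨h, -⟩
  exacts [h, absurd h ha, absurd h hb]

lemma adj_or_adj_of_identify_adj_merged (huv : u ≠ v) {b : {x : V // x ≠ v}}
    (hb : (identify G u v).Adj ⟨u, huv⟩ b) : G.Adj u b.1 ∨ G.Adj v b.1 := by
  rcases hb with ⟨hne, h | ⟨-, h⟩ | ⟨h, -⟩⟩
  exacts [Or.inl h, Or.inr h, absurd (Subtype.ext h.symm) hne]

lemma edges_mem_comap_of_merged_not_mem_support (huv : u ≠ v) {x y : {x : V // x ≠ v}}
    {W' : (identify G u v).Walk x y} (hW : ⟨u, huv⟩ ∉ W'.support) :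
    ∀ e ∈ W'.edges, e ∈ (G.comap Subtype.val).edgeSet := by
  intro e he
  induction e using Sym2.ind with
  | _ a b =>
  have hne (c) (hc : c ∈ W'.support) : c.1 ≠ u := fun h =>
    hW (Subtype.ext (a2 := ⟨u, huv⟩) h ▸ hc)
  exact adj_of_identify_adj (W'.adj_of_mem_edges he) (hne a (W'.fst_mem_support_of_mem_edges he))
    (hne b (W'.snd_mem_support_of_mem_edges he))

def identifyLift (huv : u ≠ v) {x y : {x : V // x ≠ v}} (W' : (identify G u v).Walk x y)
    (hW : ⟨u, huv⟩ ∉ W'.support) : G.Walk x.1 y.1 :=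
  (W'.transfer _ (edges_mem_comap_of_merged_not_mem_support huv hW)).map
    (Hom.comap Subtype.val G)

variable (huv : u ≠ v) {x y : {x : V // x ≠ v}}

lemma support_identifyLift (W' : (identify G u v).Walk x y) (hW : ⟨u, huv⟩ ∉ W'.support) :
    (identifyLift huv W' hW).support = W'.support.map Subtype.val :=
  (Walk.support_map _ _).trans (congrArg _ (Walk.support_transfer _ _))

lemma isPath_identifyLift {W' : (identify G u v).Walk x y} (hW' : W'.IsPath)
    (hW : ⟨u, huv⟩ ∉ W'.support) : (identifyLift huv W' hW).IsPath :=
  (hW'.transfer _).map Subtype.val_injective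

lemma isCycle_identifyLift {W' : (identify G u v).Walk x x} (hW' : W'.IsCycle)
    (hW : ⟨u, huv⟩ ∉ W'.support) : (identifyLift huv W' hW).IsCycle :=
  (hW'.transfer _).map Subtype.val_injective

variable [DecidableEq V]

@[simp]
lemma identifyMap_val (a : {x : V // x ≠ v}) : identifyMap u v huv a.1 = a := by
  simp [identifyMap, a.2]

@[simp]
lemma identifyMap_left : identifyMap u v huv u = ⟨u, huv⟩ := by
  simp [identifyMap, huv]

@[simp]
lemma identifyMap_right : identifyMap u v huv v = ⟨u, huv⟩ := by
  simp [identifyMap]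

lemma exists_walk_netCount_eq_of_adj (hadj : G.Adj u v)
    (W' : (identify G u v).Walk x y) :
    ∃ W : G.Walk x.1 y.1, ∀ a b, netCount (identifyMap u v huv) W a b = netCount id W' a b := by
  induction W' with
  | nil => exact ⟨.nil, by simp⟩
  | @cons x y z h W' ih =>
    obtain ⟨W, hW⟩ := ih
    rcases h.2 with hxy | ⟨hx, hvy⟩ | ⟨hy, hxv⟩
    · exact ⟨.cons hxy W, fun a b => by simp [netCount_cons, hW]⟩
    · obtain rfl : x = ⟨u, huv⟩ := Subtype.ext hx
      exact ⟨.cons hadj (.cons hvy W), fun a b => by simp [netCount_cons, hW]⟩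
    · obtain rfl : y = ⟨u, huv⟩ := Subtype.ext hy
      exact ⟨.cons hxv (.cons hadj.symm W), fun a b => by simp [netCount_cons, hW]⟩

lemma netCount_identifyLift (W' : (identify G u v).Walk x y) (hW : ⟨u, huv⟩ ∉ W'.support)
    (a b : {x : V // x ≠ v}) :
    netCount (identifyMap u v huv) (identifyLift huv W' hW) a b = netCount id W' a b := by
  refine (netCount_map _ _ _ a b).trans ((netCount_transfer _ _ _ a b).trans ?_)
  congr 1
  funext c
  exact identifyMap_val huv c

end Identify

namespace SimpleGraph

variable {V : Type} {G : SimpleGraph V}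

lemma exists_adj_adj_of_dist_eq_two {u v : V} (h : G.dist u v = 2) :
    ∃ w, G.Adj u w ∧ G.Adj v w := by
  rw [dist, ENat.toNat_eq_iff two_ne_zero] at h
  exact (edist_eq_two_iff.mp h).2.2

theorem Walk.IsPath.exists_cycle_or_append_cycles_of_merge [DecidableEq V] {C : Type}
    [DecidableEq C] (f : V → C) {u v w a c : V} (hf : f u = f v) (hwu : G.Adj w u)
    (hwv : G.Adj w v) (ha : G.Adj u a ∨ G.Adj v a) (hc : G.Adj u c ∨ G.Adj v c)
    {L : G.Walk a c} (hL : L.IsPath) (hu : u ∉ L.support) (hv : v ∉ L.support) (hac : a ≠ c) :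
    ∃ (x : V) (W : G.Walk x x), W.IsCycleOrAppendCycles ∧ ∀ i j,
      netCount f W i j = stepNet (f u) (f a) i j + netCount f L i j + stepNet (f c) (f u) i j := by
  obtain ⟨s, t, hs, ht, hsa, htc, hst⟩ : ∃ s t, (s = u ∨ s = v) ∧ (t = u ∨ t = v) ∧
      G.Adj s a ∧ G.Adj t c ∧ (s = t ∨ ¬ G.Adj t a ∧ ¬ G.Adj s c) := by
    by_cases hU : G.Adj u a ∧ G.Adj u c
    · exact ⟨u, u, .inl rfl, .inl rfl, hU.1, hU.2, .inl rfl⟩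
    by_cases hV : G.Adj v a ∧ G.Adj v c
    · exact ⟨v, v, .inr rfl, .inr rfl, hV.1, hV.2, .inl rfl⟩
    rcases ha with hua | hva
    · have hvc := hc.resolve_left fun h => hU ⟨hua, h⟩
      exact ⟨u, v, .inl rfl, .inr rfl, hua, hvc,
        .inr ⟨fun h => hV ⟨h, hvc⟩, fun h => hU ⟨hua, h⟩⟩⟩
    · have huc := hc.resolve_right fun h => hV ⟨hva, h⟩
      exact ⟨v, u, .inr rfl, .inl rfl, hva, huc,
        .inr ⟨fun h => hU ⟨h, huc⟩, fun h => hV ⟨hva, h⟩⟩⟩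
  have hpair {r : V} (hr : r = u ∨ r = v) : f r = f u ∧ r ∉ L.support ∧ G.Adj w r := by
    rcases hr with rfl | rfl
    exacts [⟨rfl, hu, hwu⟩, ⟨hf.symm, hv, hwv⟩]
  obtain ⟨hfs, hsL, hws⟩ := hpair hs
  obtain ⟨hft, htL, hwt⟩ := hpair ht
  rcases hst with rfl | ⟨hta, hsc⟩
  · refine ⟨s, _, Or.inl (hL.cons_concat_isCycle hsL hac hsa htc.symm), fun i j => ?_⟩
    rw [netCount_cons, netCount_concat, hfs, add_assoc]
  · have hst : s ≠ t := by rintro rfl; exact hta hsa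
    obtain ⟨x, W, hW, hperm⟩ := hL.exists_cycle_or_append_cycles_of_cons_concat hsL htL hst hsa
      htc.symm hws hwt.symm (by rintro rfl; exact hta hwt.symm) (by rintro rfl; exact hsc hws.symm)
    refine ⟨x, W, hW, fun i j => ?_⟩
    rw [netCount_eq_of_perm_darts f hperm, netCount_cons, netCount_concat, netCount_cons,
      netCount_concat, hfs, hft, stepNet_swap (f u) (f w)]
    ring

end SimpleGraph

lemma exists_cycle_or_append_cycles_netCount_eq {V : Type} [DecidableEq V] {G : SimpleGraph V}
    {u v w : V} (huv : u ≠ v) (hwu : G.Adj w u) (hwv : G.Adj w v) {x' : {x : V // x ≠ v}}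
    (C : (identify G u v).Walk x' x') (hC : C.IsCycle) :
    ∃ (x : V) (W : G.Walk x x), W.IsCycleOrAppendCycles ∧
      ∀ a b, netCount (identifyMap u v huv) W a b = netCount id C a b := by
  by_cases hu : ⟨u, huv⟩ ∈ C.support
  · obtain ⟨a, c, ha, Q, hc, hCQ, hQ, huQ, hac⟩ := (hC.rotate hu).exists_eq_cons_concat
    have hsupp := support_identifyLift huv Q huQ
    obtain ⟨x, W, hW, hnet⟩ :=
      (isPath_identifyLift huv hQ huQ).exists_cycle_or_append_cycles_of_merge
        (identifyMap u v huv) (by simp) hwu hwv (adj_or_adj_of_identify_adj_merged huv ha)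
        (adj_or_adj_of_identify_adj_merged huv hc.symm) (by simpa [hsupp] using fun _ => huQ)
        (by simp [hsupp]) (fun h => hac (Subtype.ext h))
    refine ⟨x, W, hW, fun i j => ?_⟩
    rw [hnet, ← netCount_rotate id C hu, hCQ, netCount_cons, netCount_concat,
      netCount_identifyLift]
    simp [add_assoc]
  · exact ⟨x'.1, identifyLift huv C hu, Or.inl (isCycle_identifyLift huv hC hu),
      netCount_identifyLift huv C hu⟩

/-- Let `G'` be the graph obtained from `G` by identifying the distinct
vertices `u` and `v`, with quotient map `h`.  If `u` and `v` are adjacent, then for every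
cycle `C` of `G'` there is a closed walk `W` of `G` whose image `h(W)` is homologous to `C`
in `G'`. If `d(u,v) = 2`, the same holds, and moreover `W` can be chosen to be a single
cycle, or to be a concatenation of two cycles of `G` sharing a vertex. -/
theorem identify_homology_epi_on_cycles
    {V : Type} [DecidableEq V]
    (G : SimpleGraph V) (u v : V) (huv : u ≠ v) :
    (G.Adj u v →
      ∀ (x' : {x : V // x ≠ v}) (W' : (identify G u v).Walk x' x'), W'.IsCycle →
        ∃ (x : V) (W : G.Walk x x),
          ∀ a b : {x : V // x ≠ v}, (identify G u v).Adj a b →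
            netCount (identifyMap u v huv) W a b = netCount id W' a b) ∧
    (G.dist u v = 2 →
      ∀ (x' : {x : V // x ≠ v}) (W' : (identify G u v).Walk x' x'), W'.IsCycle →
        ∃ (x : V) (W : G.Walk x x),
          (∀ a b : {x : V // x ≠ v}, (identify G u v).Adj a b →
            netCount (identifyMap u v huv) W a b = netCount id W' a b) ∧
          (W.IsCycle ∨
            ∃ W₁ W₂ : G.Walk x x, W₁.IsCycle ∧ W₂.IsCycle ∧ W = W₁.append W₂)) := by
  refine ⟨fun hadj x' W' _ => ?_, fun hdist x' W' hW' => ?_⟩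
  · obtain ⟨W, hW⟩ := exists_walk_netCount_eq_of_adj huv hadj W'
    exact ⟨x'.1, W, fun a b _ => hW a b⟩
  · obtain ⟨w, huw, hvw⟩ := exists_adj_adj_of_dist_eq_two hdist
    obtain ⟨x, W, hcycles, hW⟩ :=
      exists_cycle_or_append_cycles_netCount_eq huv huw.symm hvw.symm W' hW'
    exact ⟨x, W, fun a b _ => hW a b, hcycles⟩
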